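/- arXiv:2602.18997 — 2 statements merged into one kernel-verified Lean document; each statement's English description precedes it below -/
import Mathlib

section
/- Under the mirror descent update ∇ψ(W_i) = ∇ψ(W_{i−1}) − η∇ℒ(W_{i−1}), if W interpolates (ℒ(W) = 0 and ℒ is nonnegative), ℒ is convex, and ψ − ηℒ is convex, then D_ψ(W, W_i) ≤ D_ψ(W, W_{i−1}). -/
/-! By the three-point identity and the update rule,
`D_ψ(W, W_i) - D_ψ(W, W_{i-1}) = η ⟪∇ℒ(W_{i-1}), W - W_i⟫ - D_ψ(W_i, W_{i-1})`.
Convexity of `ψ - ηℒ` bounds `D_ψ(W_i, W_{i-1})` below by `η D_ℒ(W_i, W_{i-1})`, and convexity of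
`ℒ` together with `ℒ(W) = 0` then bounds the right-hand side by `-η ℒ(W_i) ≤ 0`. -/

open scoped RealInnerProductSpace

noncomputable def breg {E : Type*} [NormedAddCommGroup E] [InnerProductSpace ℝ E]
    [CompleteSpace E] (f : E → ℝ) (U V : E) : ℝ :=
  f U - f V - ⟪gradient f V, U - V⟫

open Set

section
variable {E : Type*} [NormedAddCommGroup E] [InnerProductSpace ℝ E] [CompleteSpace E]
  {f g : E → ℝ} {f' g' x : E}

theorem HasGradientAt.sub (hf : HasGradientAt f f' x) (hg : HasGradientAt g g' x) :
    HasGradientAt (fun y => f y - g y) (f' - g') x := by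
  rw [hasGradientAt_iff_hasFDerivAt, map_sub]
  exact hf.hasFDerivAt.sub hg.hasFDerivAt

theorem HasGradientAt.const_mul (c : ℝ) (hf : HasGradientAt f f' x) :
    HasGradientAt (fun y => c * f y) (c • f') x := by
  rw [hasGradientAt_iff_hasFDerivAt, map_smul]
  exact hf.hasFDerivAt.const_smul c

theorem ConvexOn.inner_gradient_le {s : Set E} (hc : ConvexOn ℝ s f) {y : E} (hx : x ∈ s)
    (hy : y ∈ s) (hf : DifferentiableAt ℝ f x) :
    ⟪gradient f x, y - x⟫ ≤ f y - f x := by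
  set φ : ℝ → ℝ := fun t => f (AffineMap.lineMap x y t)
  have hφ_convex : ConvexOn ℝ (Icc 0 1) φ :=
    (hc.comp_affineMap (AffineMap.lineMap x y)).subset
      (fun _ ht => hc.1.lineMap_mem hx hy ht) (convex_Icc 0 1)
  have hline : HasDerivAt (fun t : ℝ => AffineMap.lineMap x y t) (y - x) 0 := by
    simpa [AffineMap.lineMap_apply_module'] using
      ((hasDerivAt_id (0 : ℝ)).smul_const (y - x)).add_const x
  have hφ_deriv : HasDerivAt φ ⟪gradient f x, y - x⟫ 0 := by
    have hf' := hf.hasGradientAt.hasFDerivAt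
    rw [← AffineMap.lineMap_apply_zero (k := ℝ) x y] at hf'
    simpa [φ, Function.comp_def] using hf'.comp_hasDerivAt 0 hline
  have hslope := hφ_convex.le_slope_of_hasDerivAt (left_mem_Icc.2 zero_le_one)
    (right_mem_Icc.2 zero_le_one) one_pos hφ_deriv
  simpa [slope, φ] using hslope

theorem breg_nonneg_of_convexOn {s : Set E} (hc : ConvexOn ℝ s f) {U V : E} (hU : U ∈ s)
    (hV : V ∈ s) (hf : DifferentiableAt ℝ f V) : 0 ≤ breg f U V :=
  sub_nonneg.2 (hc.inner_gradient_le hV hU hf)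

theorem breg_sub_const_mul (hf : DifferentiableAt ℝ f x) (hg : DifferentiableAt ℝ g x)
    (c : ℝ) (U : E) :
    breg (fun y => f y - c * g y) U x = breg f U x - c * breg g U x := by
  rw [breg, breg, breg, (hf.hasGradientAt.sub (hg.hasGradientAt.const_mul c)).gradient,
    inner_sub_left, real_inner_smul_left]
  ring

/-- The three-point identity of Bregman divergences. -/
theorem breg_sub_breg (f : E → ℝ) (W U V : E) :
    breg f W U - breg f W V = ⟪gradient f V - gradient f U, W - U⟫ - breg f U V := by
  simp only [breg, inner_sub_left, inner_sub_right]
  ring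

end

/-- One mirror descent step does not increase the Bregman divergence to an interpolator. -/
theorem smd_step_decreases {d k : ℕ}
    (ψ L : EuclideanSpace ℝ (Fin d × Fin k) → ℝ)
    (hψ : Differentiable ℝ ψ) (hL : Differentiable ℝ L)
    (η : ℝ) (hη : 0 < η)
    (hLconv : ConvexOn ℝ Set.univ L)
    (hcomb : ConvexOn ℝ Set.univ (fun X => ψ X - η * L X))
    (Wprev Wcur W : EuclideanSpace ℝ (Fin d × Fin k))
    (hstep : gradient ψ Wcur = gradient ψ Wprev - η • gradient L Wprev)
    (hWzero : L W = 0) (hLnonneg : ∀ V, 0 ≤ L V) :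
    breg ψ W Wcur ≤ breg ψ W Wprev := by
  have hthree := breg_sub_breg ψ W Wcur Wprev
  rw [hstep, sub_sub_cancel, real_inner_smul_left] at hthree
  have hcomb_nonneg := breg_nonneg_of_convexOn hcomb (mem_univ Wcur) (mem_univ Wprev)
    ((hψ Wprev).sub ((hL Wprev).const_mul η))
  rw [breg_sub_const_mul (hψ Wprev) (hL Wprev)] at hcomb_nonneg
  have hL_nonneg := mul_nonneg hη.le
    (breg_nonneg_of_convexOn hLconv (mem_univ W) (mem_univ Wprev) (hL Wprev))
  have hLcur := mul_nonneg hη.le (hLnonneg Wcur)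
  simp only [breg, hWzero, inner_sub_right] at hthree hcomb_nonneg hL_nonneg ⊢
  linarith
end

section
/- Under the mirror descent update ∇ψ(W_i) = ∇ψ(W_{i−1}) − η∇ℒ_i(W_{i−1}) for i = 1,…,T, where each ℒ_i is convex nonnegative with ℒ_i(W) = 0 for a fixed interpolating W, and each ψ − ηℒ_i is convex, we have D_ψ(W, W_0) ≥ D_ψ(W, W_T) + η·Σ_{i=1}^T ℒ_i(W_i). In particular Σ_{i=1}^T ℒ_i(W_i) ≤ D_ψ(W, W_0)/η for all T, so ℒ_i(W_i) → 0. -/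
/-!
Put `ℒ = ℒ_{i+1}`. By the update rule, `D_ψ(W, W_i) - D_ψ(W, W_{i+1})` equals
`ψ(W_{i+1}) - ψ(W_i) - ⟪∇ψ(W_i), W_{i+1} - W_i⟫ - η ⟪∇ℒ(W_i), W - W_{i+1}⟫`.
The first-order condition for the convex function `ψ - ηℒ` at `W_i` bounds the first three
terms below by `η (ℒ(W_{i+1}) - ℒ(W_i) - ⟪∇ℒ(W_i), W_{i+1} - W_i⟫)`, and the one for `ℒ`
gives `ℒ(W_i) + ⟪∇ℒ(W_i), W - W_i⟫ ≤ ℒ(W) = 0`; so every step decreases `D_ψ(W, ·)` by at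
least `η ℒ(W_{i+1})`. Telescoping gives the inequality. Since `ψ = (ψ - ηℒ) + ηℒ` is convex,
`D_ψ ≥ 0`, so the partial sums of the nonnegative series `∑ ℒ_i(W_i)` are bounded by
`D_ψ(W, W_0) / η` and its terms tend to `0`.
-/

open scoped RealInnerProductSpace

open Set Finset

theorem ConvexOn.add_fderiv_sub_le {E : Type*} [NormedAddCommGroup E] [NormedSpace ℝ E]
    {f : E → ℝ} (hf : ConvexOn ℝ univ f) {x : E} (hx : DifferentiableAt ℝ f x) (y : E) :
    f x + fderiv ℝ f x (y - x) ≤ f y := by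
  have hline : HasDerivAt (AffineMap.lineMap (k := ℝ) x y) (y - x) 0 :=
    AffineMap.hasDerivAt_lineMap
  have hderiv : HasDerivAt (f ∘ AffineMap.lineMap (k := ℝ) x y) (fderiv ℝ f x (y - x)) 0 := by
    have hfx : HasFDerivAt f (fderiv ℝ f x) (AffineMap.lineMap x y (0 : ℝ)) := by
      simpa using hx.hasFDerivAt
    exact hfx.comp_hasDerivAt 0 hline
  have hslope := (hf.comp_affineMap (AffineMap.lineMap x y)).le_slope_of_hasDerivAt
    (mem_univ 0) (mem_univ 1) one_pos hderiv
  simp only [slope_def_field, Function.comp_apply, AffineMap.lineMap_apply_zero,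
    AffineMap.lineMap_apply_one, sub_zero, div_one] at hslope
  linarith

section InnerProductSpace

variable {E : Type*} [NormedAddCommGroup E] [InnerProductSpace ℝ E] [CompleteSpace E]

theorem ConvexOn.add_inner_gradient_sub_le {f : E → ℝ} (hf : ConvexOn ℝ univ f) {x : E}
    (hx : DifferentiableAt ℝ f x) (y : E) : f x + ⟪gradient f x, y - x⟫ ≤ f y := by
  simpa only [inner_gradient_left] using hf.add_fderiv_sub_le hx y

theorem breg_nonneg {f : E → ℝ} (hf : ConvexOn ℝ univ f) {V : E} (hV : DifferentiableAt ℝ f V)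
    (U : E) : 0 ≤ breg f U V := by
  have := hf.add_inner_gradient_sub_le hV U
  rw [breg]
  linarith

theorem breg_add_mul_sub_le_of_mirror_step {ψ L : E → ℝ} {η : ℝ} {V V' : E}
    (hψ : DifferentiableAt ℝ ψ V) (hL : DifferentiableAt ℝ L V) (hη : 0 ≤ η)
    (hLconv : ConvexOn ℝ univ L) (hcomb : ConvexOn ℝ univ (fun X => ψ X - η * L X))
    (hstep : gradient ψ V' = gradient ψ V - η • gradient L V) (W : E) :
    breg ψ W V' + η * (L V' - L W) ≤ breg ψ W V := by
  have hcomb_deriv : HasFDerivAt (fun X => ψ X - η * L X)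
      (fderiv ℝ ψ V - η • fderiv ℝ L V) V :=
    hψ.hasFDerivAt.sub (hL.hasFDerivAt.const_smul η)
  have hcomb_le := hcomb.add_fderiv_sub_le hcomb_deriv.differentiableAt V'
  have hL_le := hLconv.add_inner_gradient_sub_le hL W
  simp only [hcomb_deriv.fderiv, FunLike.coe_sub, FunLike.coe_smul, Pi.sub_apply, Pi.smul_apply,
    smul_eq_mul, ← inner_gradient_left] at hcomb_le
  have hsplit : ∀ g : E, ⟪g, W - V⟫ = ⟪g, W - V'⟫ + ⟪g, V' - V⟫ := fun g => by
    rw [← inner_add_right, sub_add_sub_cancel]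
  rw [hsplit] at hL_le
  simp only [breg, hstep, inner_sub_left, real_inner_smul_left, hsplit (gradient ψ V)]
  linarith [mul_le_mul_of_nonneg_left hL_le hη]

end InnerProductSpace

theorem add_sum_range_le_of_forall_succ_add_le {a c : ℕ → ℝ} (h : ∀ n, a (n + 1) + c n ≤ a n)
    (T : ℕ) : a T + ∑ i ∈ range T, c i ≤ a 0 := by
  have : ∑ i ∈ range T, c i ≤ ∑ i ∈ range T, (a i - a (i + 1)) :=
    sum_le_sum fun i _ => by linarith [h i]
  rw [sum_range_sub'] at this
  linarith

/-- Telescoped mirror descent inequality and convergence of the losses to zero. -/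
theorem smd_telescoped {d k : ℕ}
    (ψ : EuclideanSpace ℝ (Fin d × Fin k) → ℝ)
    (L : ℕ → EuclideanSpace ℝ (Fin d × Fin k) → ℝ)
    (hψ : Differentiable ℝ ψ) (hL : ∀ i, Differentiable ℝ (L i))
    (hLconv : ∀ i, ConvexOn ℝ Set.univ (L i))
    (hLnonneg : ∀ i V, 0 ≤ L i V)
    (η : ℝ) (hη : 0 < η)
    (hcomb : ∀ i, ConvexOn ℝ Set.univ (fun X => ψ X - η * L i X))
    (Wseq : ℕ → EuclideanSpace ℝ (Fin d × Fin k))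
    (hstep : ∀ i : ℕ,
      gradient ψ (Wseq (i + 1)) =
        gradient ψ (Wseq i) - η • gradient (L (i + 1)) (Wseq i))
    (W : EuclideanSpace ℝ (Fin d × Fin k))
    (hWzero : ∀ i, L i W = 0) :
    (∀ T : ℕ,
      breg ψ W (Wseq 0) ≥
        breg ψ W (Wseq T) + η * ∑ i ∈ Finset.range T, L (i + 1) (Wseq (i + 1))) ∧
    Filter.Tendsto (fun i => L (i + 1) (Wseq (i + 1))) Filter.atTop (nhds 0) := by
  have hψconv : ConvexOn ℝ univ ψ := by
    refine ((hcomb 0).add ((hLconv 0).smul hη.le)).congr fun X _ => ?_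
    simp
  have hdescent : ∀ i, breg ψ W (Wseq (i + 1)) + η * L (i + 1) (Wseq (i + 1)) ≤
      breg ψ W (Wseq i) := fun i => by
    simpa only [hWzero, sub_zero] using breg_add_mul_sub_le_of_mirror_step (hψ _) (hL (i + 1) _)
      hη.le (hLconv (i + 1)) (hcomb (i + 1)) (hstep i) W
  have htelescoped : ∀ T, breg ψ W (Wseq T) + η * ∑ i ∈ range T, L (i + 1) (Wseq (i + 1)) ≤
      breg ψ W (Wseq 0) := fun T => by
    simpa only [mul_sum] using add_sum_range_le_of_forall_succ_add_le
      (a := fun i => breg ψ W (Wseq i)) (c := fun i => η * L (i + 1) (Wseq (i + 1))) hdescent T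
  refine ⟨htelescoped, Summable.tendsto_atTop_zero ?_⟩
  refine summable_of_sum_range_le (c := breg ψ W (Wseq 0) / η) (fun i => hLnonneg _ _) fun T => ?_
  rw [le_div_iff₀' hη]
  linarith [htelescoped T, breg_nonneg hψconv (hψ (Wseq T)) W]
end
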